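/- Let m ≥ 1 be an integer and let R = ℂ[(X₁)₁₁, (X₁)₁₂, (X₁)₂₁, (X₁)₂₂, …, (X_m)₁₁, (X_m)₁₂, (X_m)₂₁, (X_m)₂₂, T] be the polynomial ring over ℂ in 4m + 1 variables. For i = 1, …, m let E_i = (X_i)₁₁·(X_i)₂₂ − (X_i)₁₂·(X_i)₂₁ − T². Then E₁, …, E_m is a regular sequence in R. -/

import Mathlib

open MvPolynomial

/-- The polynomial ring `R = ℂ[(Xᵢ)ⱼₖ, T]` in `4m + 1` variables, where the variable
`Sum.inl (i, j, k)` is the `(j,k)` entry of the `i`-th generic 2×2 matrix `Xᵢ` and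
`Sum.inr ()` is `T`. -/
noncomputable abbrev genericMatrixRing (m : ℕ) :=
  MvPolynomial ((Fin m × Fin 2 × Fin 2) ⊕ Unit) ℂ

/-- `Eᵢ = det Xᵢ − T² = (Xᵢ)₁₁(Xᵢ)₂₂ − (Xᵢ)₁₂(Xᵢ)₂₁ − T²`. -/
noncomputable def detMinusTsq (m : ℕ) (i : Fin m) : genericMatrixRing m :=
  X (Sum.inl (i, 0, 0)) * X (Sum.inl (i, 1, 1))
    - X (Sum.inl (i, 0, 1)) * X (Sum.inl (i, 1, 0)) - X (Sum.inr ()) ^ 2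

/-!
For every finite set `S` of indices, the ideal `(Eᵢ : i ∈ S)` is prime and does not contain `E_k`
for `k ∉ S`. This gives regularity: an element outside a prime ideal is a nonzerodivisor modulo
it, and the ideal of all the `Eᵢ` is proper.

Separating the variables of the `k`-th block identifies `R` with `B[x₀₀, x₀₁, x₁₀, x₁₁]`, where `B`
is the polynomial ring in the remaining variables. Then `(Eᵢ : i ∈ S)` is the extension of the
analogous ideal `J` of `B`, which is prime, and `E_k` becomes `x₀₀x₁₁ − x₀₁x₁₀ − t²`; it stays prime
over the domain `B/J`, being linear in `x₀₀` with the prime coefficient `x₁₁`, which does not divide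
the constant term `x₀₁x₁₀ + t²`.
-/

namespace Polynomial

variable {A : Type*} [CommRing A]

theorem exists_C_pow_mul_eq_mul_add_C (u b : A) (f : A[X]) :
    ∃ (N : ℕ) (q : A[X]) (r : A), C u ^ N * f = q * (C u * X - C b) + C r := by
  induction f using Polynomial.induction_on with
  | C a => exact ⟨0, 0, a, by ring⟩
  | add f g hf hg =>
    obtain ⟨N₁, q₁, r₁, h₁⟩ := hf
    obtain ⟨N₂, q₂, r₂, h₂⟩ := hg
    refine ⟨N₁ + N₂, C u ^ N₂ * q₁ + C u ^ N₁ * q₂, u ^ N₂ * r₁ + u ^ N₁ * r₂, ?_⟩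
    simp only [map_add, map_mul, map_pow]
    linear_combination C u ^ N₂ * h₁ + C u ^ N₁ * h₂
  | monomial n a ih =>
    obtain ⟨N, q, r, h⟩ := ih
    refine ⟨N + 1, C u * X * q + C r, r * b, ?_⟩
    simp only [map_mul]
    linear_combination C u * X * h

variable [IsDomain A]

/-- `C u * X - C b` generates the kernel of evaluation at `b / u` in the fraction field. -/
theorem prime_C_mul_X_sub_C {u b : A} (hu : Prime u) (hb : ¬ u ∣ b) :
    Prime (C u * X - C b) := by
  set p : A[X] := C u * X - C b
  have hp : p ≠ 0 := fun h => hu.ne_zero (by simpa [p] using congrArg (coeff · 1) h)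
  have hCu : ¬ C u ∣ p := by
    rintro ⟨g, hg⟩
    have h0 : -b = u * g.coeff 0 := by simpa [p] using congrArg (coeff · 0) hg
    exact hb ⟨-g.coeff 0, by linear_combination -h0⟩
  let φ := algebraMap A (FractionRing A)
  have hφ : Function.Injective φ := IsFractionRing.injective A _
  let θ : A[X] →+* FractionRing A := eval₂RingHom φ (φ b / φ u)
  have hθp : θ p = 0 := by
    simp [θ, p, mul_div_cancel₀ _ ((map_ne_zero_iff φ hφ).mpr hu.ne_zero)]
  suffices Ideal.span {p} = RingHom.ker θ by
    rw [← Ideal.span_singleton_prime hp, this]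
    exact RingHom.ker_isPrime θ
  refine le_antisymm ((Ideal.span_singleton_le_iff_mem _).mpr hθp) fun f hf => ?_
  obtain ⟨N, q, r, hf'⟩ := exists_C_pow_mul_eq_mul_add_C u b f
  obtain rfl : r = 0 := hφ <| by
    have := congrArg θ hf'
    rw [map_mul, (RingHom.mem_ker).mp hf, map_add, map_mul, hθp] at this
    simpa [θ] using this.symm
  obtain ⟨q', rfl⟩ : C u ^ N ∣ q :=
    (prime_C_iff.mpr hu).pow_dvd_of_dvd_mul_right N hCu ⟨f, by simpa using hf'.symm⟩
  rw [map_zero, add_zero, mul_assoc] at hf'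
  rw [mul_left_cancel₀ (pow_ne_zero N (C_ne_zero.mpr hu.ne_zero)) hf']
  exact Ideal.mul_mem_left _ _ (Ideal.mem_span_singleton_self p)

end Polynomial

open scoped Polynomial

namespace MvPolynomial

variable {σ R : Type*} [CommRing R] [IsDomain R]

theorem prime_mul_X_sub {f g : MvPolynomial σ R} {i : σ} (hf : Prime f) (hif : i ∉ f.vars)
    (hig : i ∉ g.vars) (hfg : ¬ f ∣ g) : Prime (f * X i - g) := by
  classical
  let e : MvPolynomial σ R ≃ₐ[R] (MvPolynomial {j // j ≠ i} R)[X] :=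
    (renameEquiv R (Equiv.optionSubtypeNe i).symm).trans (optionEquivLeft R _)
  have he : ∀ p, rename (↑) p = e.symm (Polynomial.C p) := by
    have : e.symm.toAlgHom.comp Polynomial.CAlgHom = rename (Subtype.val : {j // j ≠ i} → σ) := by
      ext; simp [e]
    exact fun p => (DFunLike.congr_fun this p).symm
  have hX : X i = e.symm Polynomial.X := by simp [e]
  obtain ⟨f, rfl⟩ := exists_rename_eq_of_vars_subset_range f (Subtype.val : {j // j ≠ i} → σ)
    Subtype.val_injective fun j hj => ⟨⟨j, fun h => hif (h ▸ hj)⟩, rfl⟩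
  obtain ⟨g, rfl⟩ := exists_rename_eq_of_vars_subset_range g (Subtype.val : {j // j ≠ i} → σ)
    Subtype.val_injective fun j hj => ⟨⟨j, fun h => hig (h ▸ hj)⟩, rfl⟩
  rw [he, MulEquiv.prime_iff, Polynomial.prime_C_iff] at hf
  rw [he, he, hX, ← map_mul, ← map_sub, MulEquiv.prime_iff]
  exact Polynomial.prime_C_mul_X_sub_C hf fun h => hfg (map_dvd _ h)

theorem prime_X_mul_X_sub_X_mul_X_sub_C (c : R) :
    Prime (X (0, 0) * X (1, 1) - X (0, 1) * X (1, 0) - C c : MvPolynomial (Fin 2 × Fin 2) R) := by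
  classical
  have hvars : (0, 0) ∉ (X (0, 1) * X (1, 0) + C c : MvPolynomial (Fin 2 × Fin 2) R).vars := by
    intro h
    have := vars_add_subset _ _ h
    simp only [vars_C, Finset.union_empty] at this
    simpa using vars_mul _ _ this
  have hndvd : ¬ (X (1, 1) : MvPolynomial (Fin 2 × Fin 2) R) ∣ X (0, 1) * X (1, 0) + C c := by
    rintro ⟨h, hh⟩
    have := congrArg (coeff (Finsupp.single (0, 1) 1 + Finsupp.single (1, 0) 1)) hh
    simp [coeff_X_mul', eq_comm (a := (0 : Fin 2 × Fin 2 →₀ ℕ))] at this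
  convert prime_mul_X_sub X_prime (by simp [vars_X]) hvars hndvd using 1
  ring

theorem comap_C_map {σ B : Type*} [CommRing B] (J : Ideal B) :
    (J.map (C : B →+* MvPolynomial σ B)).comap C = J :=
  le_antisymm (fun b hb => by simpa using mem_map_C_iff.mp hb 0) Ideal.le_comap_map

theorem isPrime_map_C_sup_span_singleton {σ A : Type*} [CommRing A] {I : Ideal A} [I.IsPrime]
    {P : MvPolynomial σ A} (hP : Prime (map (Ideal.Quotient.mk I) P)) :
    (I.map C ⊔ Ideal.span {P}).IsPrime := by
  have hsurj : Function.Surjective (map (σ := σ) (Ideal.Quotient.mk I)) :=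
    map_surjective _ Ideal.Quotient.mk_surjective
  have := ((Ideal.span_singleton_prime hP.ne_zero).mpr hP).comap (map (Ideal.Quotient.mk I))
  rwa [← Set.image_singleton, ← Ideal.map_span, Ideal.comap_map_of_surjective _ hsurj,
    ← RingHom.ker_eq_comap_bot, ker_map, Ideal.mk_ker, sup_comm] at this

end MvPolynomial

theorem List.mem_take_finRange {m i : ℕ} {j : Fin m} :
    j ∈ (List.finRange m).take i ↔ (j : ℕ) < i := by
  simp [List.mem_take_iff_getElem, Fin.ext_iff]

theorem isSMulRegular_quotient_smul_top_of_isPrime {R : Type*} [CommRing R] {I : Ideal R}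
    (hI : I.IsPrime) {r : R} (hr : r ∉ I) : IsSMulRegular (R ⧸ (I • ⊤ : Submodule R R)) r := by
  rw [smul_eq_mul, Ideal.mul_top, isSMulRegular_quotient_iff_mem_of_smul_mem]
  exact fun x hx => (hI.mem_or_mem hx).resolve_left hr

noncomputable def blockQuadric (K : Type*) [CommRing K] {ι : Type*} (i : ι) :
    MvPolynomial ((ι × Fin 2 × Fin 2) ⊕ Unit) K :=
  X (.inl (i, 0, 0)) * X (.inl (i, 1, 1)) - X (.inl (i, 0, 1)) * X (.inl (i, 1, 0))
    - X (.inr ()) ^ 2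

section SplitBlock

variable (K : Type*) [CommRing K] {ι : Type*} [DecidableEq ι]

def splitBlock (k : ι) :
    (ι × Fin 2 × Fin 2) ⊕ Unit ≃ (Fin 2 × Fin 2) ⊕ (({i // i ≠ k} × Fin 2 × Fin 2) ⊕ Unit) where
  toFun
    | .inl (i, p) => if h : i = k then .inl p else .inr (.inl (⟨i, h⟩, p))
    | .inr u => .inr (.inr u)
  invFun
    | .inl p => .inl (k, p)
    | .inr (.inl (i, p)) => .inl (i, p)
    | .inr (.inr u) => .inr u
  left_inv := by
    rintro (⟨i, p⟩ | u)
    · by_cases h : i = k <;> simp [h]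
    · rfl
  right_inv := by
    rintro (p | ⟨⟨i, hi⟩, p⟩ | u)
    · simp
    · simp [hi]
    · rfl

noncomputable def splitBlockAlgEquiv (k : ι) :
    MvPolynomial ((ι × Fin 2 × Fin 2) ⊕ Unit) K ≃ₐ[K]
      MvPolynomial (Fin 2 × Fin 2) (MvPolynomial (({i // i ≠ k} × Fin 2 × Fin 2) ⊕ Unit) K) :=
  (renameEquiv K (splitBlock k)).trans (sumAlgEquiv K _ _)

variable {K}

@[simp]
theorem splitBlockAlgEquiv_X_inl_self (k : ι) (p : Fin 2 × Fin 2) :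
    splitBlockAlgEquiv K k (X (.inl (k, p))) = X p := by
  simp [splitBlockAlgEquiv, splitBlock]

@[simp]
theorem splitBlockAlgEquiv_X_inl_of_ne {i k : ι} (h : i ≠ k) (p : Fin 2 × Fin 2) :
    splitBlockAlgEquiv K k (X (.inl (i, p))) = C (X (.inl (⟨i, h⟩, p))) := by
  simp [splitBlockAlgEquiv, splitBlock, h]

@[simp]
theorem splitBlockAlgEquiv_X_inr (k : ι) :
    splitBlockAlgEquiv K k (X (.inr ())) = C (X (.inr ())) := by
  simp [splitBlockAlgEquiv, splitBlock]

theorem splitBlockAlgEquiv_blockQuadric_self (k : ι) :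
    splitBlockAlgEquiv K k (blockQuadric K k) =
      X (0, 0) * X (1, 1) - X (0, 1) * X (1, 0) - C (X (.inr ()) ^ 2) := by
  simp [blockQuadric]

theorem splitBlockAlgEquiv_blockQuadric_of_ne {i k : ι} (h : i ≠ k) :
    splitBlockAlgEquiv K k (blockQuadric K i) = C (blockQuadric K ⟨i, h⟩) := by
  simp [blockQuadric, h]

end SplitBlock

section BlockQuadricIdeals

variable {K : Type*} [CommRing K] {ι : Type*}

theorem isPrime_span_blockQuadric_insert {S : Set ι} {k : ι} (hk : k ∉ S)
    (hS : (Ideal.span (blockQuadric K '' S)).IsPrime) :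
    (Ideal.span (blockQuadric K '' insert k S)).IsPrime ∧
      blockQuadric K k ∉ Ideal.span (blockQuadric K '' S) := by
  classical
  let e := splitBlockAlgEquiv K k
  let J := Ideal.span (blockQuadric K '' {i : {i // i ≠ k} | ↑i ∈ S})
  have hmap : (Ideal.span (blockQuadric K '' S)).map e = J.map C := by
    rw [Ideal.map_span, Ideal.map_span]
    congr 1
    ext p
    constructor
    · rintro ⟨_, ⟨i, hi, rfl⟩, rfl⟩
      have hik : i ≠ k := ne_of_mem_of_not_mem hi hk
      exact ⟨_, ⟨⟨i, hik⟩, hi, rfl⟩, (splitBlockAlgEquiv_blockQuadric_of_ne hik).symm⟩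
    · rintro ⟨_, ⟨i, hi, rfl⟩, rfl⟩
      exact ⟨_, ⟨i, hi, rfl⟩, splitBlockAlgEquiv_blockQuadric_of_ne i.2⟩
  have hJ : J.IsPrime := by
    rw [← comap_C_map (σ := Fin 2 × Fin 2) J, ← hmap]
    exact (Ideal.map_isPrime_of_equiv e).comap C
  have hQ : Prime (map (Ideal.Quotient.mk J) (e (blockQuadric K k))) := by
    rw [splitBlockAlgEquiv_blockQuadric_self]
    simp only [map_sub, map_mul, map_X, map_C]
    exact prime_X_mul_X_sub_X_mul_X_sub_C _
  constructor
  · rw [← Ideal.comap_map_of_bijective e e.bijective (I := Ideal.span _), Set.image_insert_eq,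
      Ideal.span_insert, Ideal.map_sup, hmap, Ideal.map_span, Set.image_singleton, sup_comm]
    exact (isPrime_map_C_sup_span_singleton hQ).comap e
  · intro h
    apply hQ.ne_zero
    rw [← RingHom.mem_ker, ker_map, Ideal.mk_ker, ← hmap]
    exact Ideal.mem_map_of_mem e h

variable [IsDomain K]

theorem isPrime_span_blockQuadric_image {S : Set ι} (hS : S.Finite) :
    (Ideal.span (blockQuadric K '' S)).IsPrime := by
  induction S, hS using Set.Finite.induction_on with
  | empty => simpa using Ideal.isPrime_bot
  | insert hk _ ih => exact (isPrime_span_blockQuadric_insert hk ih).1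

theorem blockQuadric_notMem_span_image {S : Set ι} (hS : S.Finite) {k : ι} (hk : k ∉ S) :
    blockQuadric K k ∉ Ideal.span (blockQuadric K '' S) :=
  (isPrime_span_blockQuadric_insert hk (isPrime_span_blockQuadric_image hS)).2

end BlockQuadricIdeals

theorem detMinusTsq_isRegularSequence_general (m : ℕ) :
    RingTheory.Sequence.IsRegular (genericMatrixRing m)
      ((List.finRange m).map (detMinusTsq m)) := by
  set rs := (List.finRange m).map (detMinusTsq m)
  have hE : detMinusTsq m = blockQuadric ℂ := rfl
  have hprefix (i : ℕ) :
      Ideal.ofList (rs.take i) = Ideal.span (blockQuadric ℂ '' {j : Fin m | ↑j < i}) :=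
    congrArg Ideal.span <| Set.ext fun r => by
      simp [rs, hE, ← List.map_take, List.mem_take_finRange]
  refine ⟨⟨fun i hi => ?_⟩, ?_⟩
  · have hi' : i < m := by simpa [rs] using hi
    rw [hprefix, show rs[i] = blockQuadric ℂ ⟨i, hi'⟩ by simp [rs, hE]]
    exact isSMulRegular_quotient_smul_top_of_isPrime
      (isPrime_span_blockQuadric_image (Set.toFinite _))
      (blockQuadric_notMem_span_image (Set.toFinite _) (lt_irrefl i))
  · rw [smul_eq_mul, Ideal.mul_top, ← List.take_length (l := rs), hprefix]
    exact (isPrime_span_blockQuadric_image (Set.toFinite _)).ne_top.symm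

/-- `E₁, …, E_m` is a regular sequence in `R`. -/
theorem detMinusTsq_isRegularSequence (m : ℕ) (hm : 1 ≤ m) :
    RingTheory.Sequence.IsRegular (genericMatrixRing m)
      ((List.finRange m).map (detMinusTsq m)) :=
  detMinusTsq_isRegularSequence_general m
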